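/- arXiv:2404.15887 — 2 statements merged into one kernel-verified Lean document; each statement's English description precedes it below -/
import Mathlib

section
/- Let ψ: ℝᵏ → ℝᵏ satisfy ψ(η+q) = ψ(η)+q for all q ∈ ℤᵏ, suppose a(η) = ψ(η) − η is bounded (‖a(η)‖ ≤ M for all η), and suppose for some m ≥ 1 and some η ∈ ℝᵏ there exists q ∈ ℤᵏ with ψₘ(η) = η + q. Then the limit ρ = lim_{n→∞} ψₙ(η)/n exists and equals q/m; in particular ρ has rational coordinates. -/
theorem stmt_4 (k : ℕ) (ψ : (Fin k → ℝ) → (Fin k → ℝ))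
    (hper : ∀ (η : Fin k → ℝ) (q : Fin k → ℤ),
      ψ (η + fun i => (q i : ℝ)) = ψ η + fun i => (q i : ℝ))
    (M : ℝ) (hbound : ∀ η : Fin k → ℝ, ‖ψ η - η‖ ≤ M)
    (m : ℕ) (hm : 1 ≤ m) (η : Fin k → ℝ) (q : Fin k → ℤ)
    (hfix : ψ^[m] η = η + fun i => (q i : ℝ)) :
    Filter.Tendsto (fun n : ℕ => (n : ℝ)⁻¹ • ψ^[n] η) Filter.atTop
      (nhds ((m : ℝ)⁻¹ • fun i => (q i : ℝ))) ∧
    ∀ i : Fin k, ∃ s : ℚ,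
      ((m : ℝ)⁻¹ • fun i => (q i : ℝ) : Fin k → ℝ) i = (s : ℝ) := by
  have hm0 : (m : ℝ) ≠ 0 := by positivity
  set qr : Fin k → ℝ := fun i => (q i : ℝ) with hqr
  have iter_add : ∀ (j : ℕ) (x : Fin k → ℝ) (p : Fin k → ℤ),
      ψ^[j] (x + fun i => (p i : ℝ)) = ψ^[j] x + fun i => (p i : ℝ) := by
    intro j
    induction j with
    | zero => intro x p; funext i; simp
    | succ j ih =>
      intro x p
      rw [Function.iterate_succ_apply, Function.iterate_succ_apply, hper, ih]
  have iter_mul : ∀ j : ℕ, ψ^[m * j] η = η + fun i => (j : ℝ) * (q i : ℝ) := by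
    intro j
    induction j with
    | zero => funext i; simp
    | succ j ih =>
      have h1 : m * (j + 1) = m * j + m := by ring
      rw [h1, Function.iterate_add_apply, hfix, iter_add, ih]
      funext i
      simp only [Pi.add_apply]
      push_cast
      ring
  have key : ∀ n : ℕ, ψ^[n] η =
      ψ^[n % m] η + fun i => ((n / m : ℕ) : ℝ) * (q i : ℝ) := by
    intro n
    conv_lhs => rw [← Nat.mod_add_div n m]
    rw [Function.iterate_add_apply, iter_mul]
    have h2 : (fun i => ((n / m : ℕ) : ℝ) * (q i : ℝ))
        = fun i => (((n / m : ℕ) * q i : ℤ) : ℝ) := by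
      funext i; rw [Int.cast_mul, Int.cast_natCast]
    rw [h2, iter_add, ← h2]
  set C : ℝ := ∑ r ∈ Finset.range m,
    ‖ψ^[r] η - ((r : ℝ) / m) • qr‖ with hC
  have hdiff : ∀ n : ℕ, 1 ≤ n →
      ‖(n : ℝ)⁻¹ • ψ^[n] η - (m : ℝ)⁻¹ • qr‖ ≤ C / n := by
    intro n hn
    have hn0 : (n : ℝ) ≠ 0 := by positivity
    have hnm : (m : ℝ) * ((n / m : ℕ) : ℝ) = (n : ℝ) - ((n % m : ℕ) : ℝ) := by
      have h := Nat.div_add_mod n m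
      have h' : ((m * (n / m) + n % m : ℕ) : ℝ) = (n : ℝ) := by norm_cast
      push_cast at h'
      linarith
    have heq : (n : ℝ)⁻¹ • ψ^[n] η - (m : ℝ)⁻¹ • qr
        = (n : ℝ)⁻¹ • (ψ^[n % m] η - (((n % m : ℕ) : ℝ) / m) • qr) := by
      funext i
      rw [key n]
      simp only [Pi.sub_apply, Pi.smul_apply, Pi.add_apply, smul_eq_mul]
      field_simp
      linear_combination (q i) * hnm
    rw [heq, norm_smul]
    have h3 : ‖(n : ℝ)⁻¹‖ = (n : ℝ)⁻¹ := by
      rw [Real.norm_eq_abs, abs_of_nonneg]; positivity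
    have h4 : C / (n : ℝ) = (n : ℝ)⁻¹ * C := div_eq_inv_mul C n
    rw [h3, h4]
    apply mul_le_mul_of_nonneg_left _ (by positivity)
    have hmem : n % m ∈ Finset.range m := Finset.mem_range.mpr (Nat.mod_lt n hm)
    exact Finset.single_le_sum (f := fun r => ‖ψ^[r] η - ((r : ℝ) / m) • qr‖)
      (fun r _ => norm_nonneg _) hmem
  constructor
  · rw [← tendsto_sub_nhds_zero_iff]
    refine squeeze_zero_norm' ?_ (tendsto_const_div_atTop_nhds_zero_nat C)
    filter_upwards [Filter.eventually_ge_atTop 1] with n hn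
    exact hdiff n hn
  · intro i
    refine ⟨(q i : ℚ) / m, ?_⟩
    simp only [Pi.smul_apply, smul_eq_mul]
    push_cast
    rw [inv_mul_eq_div]
end

section
/- Let φ: [0,∞) × ℝᵏ → ℝᵏ be continuous, satisfying φ(0,η) = η, φ(t+1,η) = φ(t, ψ(η)) with ψ(η) = φ(1,η), and φ(t, η+q) = φ(t,η)+q for all q ∈ ℤᵏ. Then for every η, the set of limit points of φ(t,η)/t as t → ∞ equals the set Q(η) of limit points of ψₙ(η)/n as n → ∞. -/
open Filter

theorem stmt_14 (k : ℕ) (φ : ℝ × (Fin k → ℝ) → (Fin k → ℝ))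
    (hcont : ContinuousOn φ (Set.Ici (0:ℝ) ×ˢ Set.univ))
    (h0 : ∀ η : Fin k → ℝ, φ (0, η) = η)
    (ψ : (Fin k → ℝ) → (Fin k → ℝ)) (hψ : ∀ η, ψ η = φ (1, η))
    (hshift : ∀ t : ℝ, 0 ≤ t → ∀ η : Fin k → ℝ, φ (t + 1, η) = φ (t, ψ η))
    (hper : ∀ t : ℝ, 0 ≤ t → ∀ (η : Fin k → ℝ) (q : Fin k → ℤ),
      φ (t, η + fun i => (q i : ℝ)) = φ (t, η) + fun i => (q i : ℝ)) :
    ∀ η : Fin k → ℝ,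
      {γ : Fin k → ℝ | ∃ u : ℕ → ℝ, Filter.Tendsto u Filter.atTop Filter.atTop ∧
        Filter.Tendsto (fun p => (u p)⁻¹ • φ (u p, η)) Filter.atTop (nhds γ)} =
      {γ : Fin k → ℝ | ∃ np : ℕ → ℕ, StrictMono np ∧ (∀ p, 1 ≤ np p) ∧
        Filter.Tendsto (fun p => (np p : ℝ)⁻¹ • ψ^[np p] η) Filter.atTop (nhds γ)} := by
  -- iterated shift
  have hiter : ∀ n : ℕ, ∀ t : ℝ, 0 ≤ t → ∀ x : Fin k → ℝ,
      φ (t + n, x) = φ (t, ψ^[n] x) := by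
    intro n
    induction n with
    | zero => intro t ht x; simp [h0]
    | succ n ih =>
      intro t ht x
      have e : t + ((n+1 : ℕ) : ℝ) = (t + n) + 1 := by push_cast; ring
      rw [e, hshift (t + n) (by positivity), ih t ht (ψ x),
        Function.iterate_succ_apply]
  intro η
  have hnat : ∀ n : ℕ, φ ((n : ℝ), η) = ψ^[n] η := by
    intro n
    have := hiter n 0 le_rfl η
    simpa [h0] using this
  -- bound on the fundamental domain
  have hcomp : IsCompact ((Set.Icc (0:ℝ) 1) ×ˢ (Set.Icc (0 : Fin k → ℝ) 1)) :=
    isCompact_Icc.prod isCompact_Icc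
  obtain ⟨C, hC⟩ := hcomp.exists_bound_of_continuousOn
    (hcont.mono (by
      rintro ⟨t, x⟩ ⟨ht, hx⟩
      exact ⟨ht.1, Set.mem_univ _⟩))
  have hC0 : 0 ≤ C := le_trans (norm_nonneg _)
    (hC (0, 0) ⟨⟨le_rfl, zero_le_one⟩, ⟨le_rfl, zero_le_one⟩⟩)
  -- key estimate
  have hkey : ∀ n : ℕ, ∀ t : ℝ, (n : ℝ) ≤ t → t ≤ (n : ℝ) + 1 →
      ‖φ (t, η) - ψ^[n] η‖ ≤ C + 1 := by
    intro n t h1 h2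
    set x := ψ^[n] η with hx
    set q : Fin k → ℤ := fun i => ⌊x i⌋ with hq
    set θ : Fin k → ℝ := fun i => Int.fract (x i) with hθ
    have hxθ : x = θ + fun i => (q i : ℝ) := by
      funext i
      simp only [hθ, hq, Pi.add_apply, Int.fract]
      ring
    have htn : (0:ℝ) ≤ t - n := by linarith
    have hφt : φ (t, η) = φ (t - n, θ) + fun i => (q i : ℝ) := by
      have e1 : φ (t, η) = φ (t - n, x) := by
        have := hiter n (t - n) htn η
        rw [← hx] at this
        rw [← this]
        norm_num
      rw [e1, hxθ, hper (t - n) htn θ q]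
    have hθ01 : θ ∈ Set.Icc (0 : Fin k → ℝ) 1 := by
      constructor
      · intro i; exact Int.fract_nonneg _
      · intro i; exact (Int.fract_lt_one _).le
    have h3 : ‖φ (t - n, θ)‖ ≤ C :=
      hC _ ⟨Set.mem_Icc.2 ⟨htn, show t - (n:ℝ) ≤ 1 by linarith⟩, hθ01⟩
    have h4 : ‖θ‖ ≤ 1 := by
      rw [pi_norm_le_iff_of_nonneg zero_le_one]
      intro i
      rw [Real.norm_eq_abs, abs_of_nonneg (Int.fract_nonneg _)]
      exact (Int.fract_lt_one _).le
    calc ‖φ (t, η) - x‖ = ‖φ (t - n, θ) - θ‖ := by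
          rw [hφt, hxθ]; abel_nf
      _ ≤ ‖φ (t - n, θ)‖ + ‖θ‖ := norm_sub_le _ _
      _ ≤ C + 1 := add_le_add h3 h4
  -- linear growth
  have hgrow : ∀ n : ℕ, ‖ψ^[n] η‖ ≤ ‖η‖ + n * (C + 1) := by
    intro n
    induction n with
    | zero => simp
    | succ n ih =>
      have h1 : ‖ψ^[n+1] η - ψ^[n] η‖ ≤ C + 1 := by
        have := hkey n ((n : ℝ) + 1) (by linarith) le_rfl
        rw [show ((n : ℝ) + 1) = ((n + 1 : ℕ) : ℝ) by push_cast; ring,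
          hnat (n+1)] at this
        exact this
      calc ‖ψ^[n+1] η‖ = ‖(ψ^[n+1] η - ψ^[n] η) + ψ^[n] η‖ := by congr 1; abel
        _ ≤ ‖ψ^[n+1] η - ψ^[n] η‖ + ‖ψ^[n] η‖ := norm_add_le _ _
        _ ≤ (C + 1) + (‖η‖ + n * (C + 1)) := add_le_add h1 ih
        _ ≤ ‖η‖ + (n + 1 : ℕ) * (C + 1) := by push_cast; nlinarith
  ext γ
  simp only [Set.mem_setOf_eq]
  constructor
  · rintro ⟨u, hu, hlim⟩
    have hupos : ∀ᶠ p in atTop, 1 ≤ u p := hu.eventually_ge_atTop 1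
    set v : ℕ → ℕ := fun p => ⌊u p⌋₊ with hv
    have hvt : Tendsto v atTop atTop := tendsto_nat_floor_atTop.comp hu
    have hdiff : Tendsto
        (fun p => (u p)⁻¹ • φ (u p, η) - (v p : ℝ)⁻¹ • ψ^[v p] η) atTop (nhds 0) := by
      apply squeeze_zero_norm' (a := fun p => (2 * (C + 1) + ‖η‖) / u p)
      · filter_upwards [hupos] with p hp
        set n : ℕ := v p with hn
        have hn1 : 1 ≤ n := Nat.le_floor (by exact_mod_cast hp)
        have hm1 : (1:ℝ) ≤ (n:ℝ) := by exact_mod_cast hn1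
        have hnr : (n : ℝ) ≤ u p := Nat.floor_le (by linarith)
        have hur : u p < (n : ℝ) + 1 := Nat.lt_floor_add_one _
        have hr0 : (0:ℝ) < u p := by linarith
        have hm0 : (0:ℝ) < (n:ℝ) := by linarith
        have hφb : ‖φ (u p, η) - ψ^[n] η‖ ≤ C + 1 := hkey n (u p) hnr hur.le
        have hψb : ‖ψ^[n] η‖ ≤ ‖η‖ + n * (C + 1) := hgrow n
        have hdec : (u p)⁻¹ • φ (u p, η) - (n : ℝ)⁻¹ • ψ^[n] η
            = (u p)⁻¹ • (φ (u p, η) - ψ^[n] η) + ((u p)⁻¹ - (n : ℝ)⁻¹) • ψ^[n] η := by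
          rw [smul_sub, sub_smul]; abel
        rw [hdec]
        have hb1 : ‖(u p)⁻¹ • (φ (u p, η) - ψ^[n] η)‖ ≤ (u p)⁻¹ * (C + 1) := by
          rw [norm_smul, Real.norm_eq_abs, abs_of_pos (by positivity)]
          exact mul_le_mul_of_nonneg_left hφb (by positivity)
        have hb2 : ‖((u p)⁻¹ - (n : ℝ)⁻¹) • ψ^[n] η‖
            ≤ ((n:ℝ)⁻¹ - (u p)⁻¹) * (‖η‖ + n * (C + 1)) := by
          rw [norm_smul, Real.norm_eq_abs, abs_sub_comm,
            abs_of_nonneg (by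
              have := inv_anti₀ hm0 hnr
              linarith)]
          exact mul_le_mul_of_nonneg_left hψb (by
            have := inv_anti₀ hm0 hnr
            linarith)
        calc ‖(u p)⁻¹ • (φ (u p, η) - ψ^[n] η) + ((u p)⁻¹ - (n : ℝ)⁻¹) • ψ^[n] η‖
            ≤ (u p)⁻¹ * (C + 1) + ((n:ℝ)⁻¹ - (u p)⁻¹) * (‖η‖ + n * (C + 1)) :=
              le_trans (norm_add_le _ _) (add_le_add hb1 hb2)
          _ ≤ (2 * (C + 1) + ‖η‖) / u p := by
              have hE : (0:ℝ) ≤ ‖η‖ := norm_nonneg η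
              rw [div_eq_mul_inv, ← sub_nonneg]
              have key : (2 * (C + 1) + ‖η‖) * (u p)⁻¹ -
                  ((u p)⁻¹ * (C + 1) + ((n:ℝ)⁻¹ - (u p)⁻¹) * (‖η‖ + n * (C + 1)))
                  = ((2 * (n:ℝ) - u p) * ‖η‖ + ((n:ℝ) + 1 - u p) * ((n:ℝ) * (C + 1)))
                    / ((n:ℝ) * u p) := by
                field_simp
                ring
              rw [key]
              apply div_nonneg _ (by positivity)
              have hi1 : (0:ℝ) ≤ (2 * (n:ℝ) - u p) * ‖η‖ := mul_nonneg (by linarith) hE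
              have hi2 : (0:ℝ) ≤ ((n:ℝ) + 1 - u p) * ((n:ℝ) * (C + 1)) :=
                mul_nonneg (by linarith) (by positivity)
              linarith
      · have h1 : Tendsto (fun p => (u p)⁻¹) atTop (nhds 0) := hu.inv_tendsto_atTop
        have := h1.const_mul (2 * (C + 1) + ‖η‖)
        simpa [div_eq_mul_inv] using this
    have hFv : Tendsto (fun p => ((v p : ℝ))⁻¹ • ψ^[v p] η) atTop (nhds γ) := by
      have := hlim.sub hdiff
      simpa using this
    obtain ⟨g, hg, hvg⟩ := strictMono_subseq_of_tendsto_atTop hvt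
    obtain ⟨p0, hp0⟩ := eventually_atTop.1
      ((hvt.comp hg.tendsto_atTop).eventually_ge_atTop 1)
    have haux : StrictMono (fun p => p + p0) := fun a b h => Nat.add_lt_add_right h p0
    refine ⟨fun p => v (g (p + p0)), hvg.comp haux, fun p => hp0 _ (Nat.le_add_left p0 p), ?_⟩
    exact hFv.comp ((hg.comp haux).tendsto_atTop)
  · rintro ⟨np, hmono, hnp1, hlim⟩
    refine ⟨fun p => (np p : ℝ), tendsto_natCast_atTop_atTop.comp hmono.tendsto_atTop, ?_⟩
    simp only [hnat]
    exact hlim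
end
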